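/- Let A = !![a₁,a₂,a₃; b₁,b₂,b₃; c₁,c₂,c₃] be a real 3×3 matrix with D := det A ≠ 0. Let (xᵢ,yᵢ,pᵢ,qᵢ) ∈ ℝ⁴ for i = 1,…,4 with hᵢ := c₁xᵢ+c₂yᵢ+c₃ ≠ 0, and let (x̃ᵢ,ỹᵢ,p̃ᵢ,q̃ᵢ) be the prolonged transform of the i-th data. Then z₄ := Δ₁₂₃Δ₁₂₄Δ₁₃₄Δ₂₃₄ is a relative invariant of weight −1 for the diagonal action on 4 points: D⁴ · z̃₄ = (h₁h₂h₃h₄)³ · z₄, where z̃₄ is computed from the transformed data; equivalently z̃₄ = J(T)⁻¹ z₄ with total Jacobian J(T) = D⁴/(h₁h₂h₃h₄)³. -/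

import Mathlib

/-!
The transformed line `ℓ̃ᵢ = hᵢ · ℓᵢ A⁻¹` is again the gradient line of the transformed data, because
`ℓ̃ᵢ` still passes through the transformed point `h⁻¹ · A (xᵢ, yᵢ, 1)`: incidence `ℓ · X = 0` is
invariant under `ℓ ↦ ℓ A⁻¹`, `X ↦ A X`. Hence each `Δ̃ᵢⱼₖ = hᵢ hⱼ hₖ Δᵢⱼₖ / D`, and in `z₄` every `hᵢ`
occurs in three of the four factors.
-/

open Matrix

/-- The gradient line `ℓ = (p, q, -p*x - q*y)` of the data `(x, y, p, q)`. -/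
noncomputable def gradLine (x y p q : ℝ) : Fin 3 → ℝ := ![p, q, -(p * x) - q * y]

/-- Determinant of the 3×3 matrix with rows `v₁, v₂, v₃`. -/
noncomputable def det3 (v₁ v₂ v₃ : Fin 3 → ℝ) : ℝ := Matrix.det (Matrix.of ![v₁, v₂, v₃])

lemma gradLine_dotProduct (x y p q : ℝ) : gradLine x y p q ⬝ᵥ ![x, y, 1] = 0 := by
  simp [gradLine, dotProduct, Fin.sum_univ_three]

lemma gradLine_eq_of_dotProduct_eq_zero (x y : ℝ) (v : Fin 3 → ℝ) (hv : v ⬝ᵥ ![x, y, 1] = 0) :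
    gradLine x y (v 0) (v 1) = v := by
  simp [dotProduct, Fin.sum_univ_three] at hv
  funext i
  fin_cases i
  · rfl
  · rfl
  · simp [gradLine]
    linarith

lemma det3_smul (r s t : ℝ) (u v w : Fin 3 → ℝ) :
    det3 (r • u) (s • v) (t • w) = r * s * t * det3 u v w := by
  simp [det3, det_fin_three]
  ring

lemma det3_vecMul (M : Matrix (Fin 3) (Fin 3) ℝ) (u v w : Fin 3 → ℝ) :
    det3 (u ᵥ* M) (v ᵥ* M) (w ᵥ* M) = det3 u v w * M.det := by
  have h : of ![u ᵥ* M, v ᵥ* M, w ᵥ* M] = of ![u, v, w] * M := by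
    ext i j
    fin_cases i <;> simp [mul_apply, vecMul, dotProduct]
  rw [det3, h, det_mul, det3]

lemma det3_smul_vecMul_inv (M : Matrix (Fin 3) (Fin 3) ℝ) (r s t : ℝ) (u v w : Fin 3 → ℝ) :
    det3 (r • u ᵥ* M⁻¹) (s • v ᵥ* M⁻¹) (t • w ᵥ* M⁻¹) = r * s * t * det3 u v w / M.det := by
  rw [det3_smul, det3_vecMul, det_nonsing_inv, Ring.inverse_eq_inv', ← div_eq_mul_inv,
    mul_div_assoc]

lemma projective_point_eq (a1 a2 a3 b1 b2 b3 c1 c2 c3 x y : ℝ) (hh : c1 * x + c2 * y + c3 ≠ 0) :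
    ![(a1 * x + a2 * y + a3) / (c1 * x + c2 * y + c3),
      (b1 * x + b2 * y + b3) / (c1 * x + c2 * y + c3), 1]
      = (c1 * x + c2 * y + c3)⁻¹ • (!![a1, a2, a3; b1, b2, b3; c1, c2, c3] *ᵥ ![x, y, 1]) := by
  rw [eq_inv_smul_iff₀ hh]
  ext i
  fin_cases i <;> simp [mulVec, dotProduct, Fin.sum_univ_three, mul_div_cancel₀ _ hh]

lemma gradLine_transform (a1 a2 a3 b1 b2 b3 c1 c2 c3 : ℝ)
    (hD : det !![a1, a2, a3; b1, b2, b3; c1, c2, c3] ≠ 0)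
    (x y p q : ℝ) (hh : c1 * x + c2 * y + c3 ≠ 0) :
    gradLine ((a1 * x + a2 * y + a3) / (c1 * x + c2 * y + c3))
      ((b1 * x + b2 * y + b3) / (c1 * x + c2 * y + c3))
      (((c1 * x + c2 * y + c3) • gradLine x y p q ᵥ* (!![a1, a2, a3; b1, b2, b3; c1, c2, c3])⁻¹) 0)
      (((c1 * x + c2 * y + c3) • gradLine x y p q ᵥ* (!![a1, a2, a3; b1, b2, b3; c1, c2, c3])⁻¹) 1)
    = (c1 * x + c2 * y + c3) • gradLine x y p q ᵥ* (!![a1, a2, a3; b1, b2, b3; c1, c2, c3])⁻¹ := by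
  apply gradLine_eq_of_dotProduct_eq_zero
  rw [projective_point_eq a1 a2 a3 b1 b2 b3 c1 c2 c3 x y hh, smul_dotProduct, dotProduct_smul,
    dotProduct_mulVec, vecMul_vecMul, nonsing_inv_mul _ (isUnit_iff_ne_zero.mpr hD), vecMul_one,
    gradLine_dotProduct, smul_zero, smul_zero]

theorem z4_is_relative_invariant_weight_neg_one
    (a1 a2 a3 b1 b2 b3 c1 c2 c3 : ℝ)
    (hD : Matrix.det !![a1, a2, a3; b1, b2, b3; c1, c2, c3] ≠ 0)
    (x1 y1 p1 q1 x2 y2 p2 q2 x3 y3 p3 q3 x4 y4 p4 q4 : ℝ)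
    (hh1 : (c1 * x1 + c2 * y1 + c3) ≠ 0)
    (hh2 : (c1 * x2 + c2 * y2 + c3) ≠ 0)
    (hh3 : (c1 * x3 + c2 * y3 + c3) ≠ 0)
    (hh4 : (c1 * x4 + c2 * y4 + c3) ≠ 0)
    (xt1 yt1 pt1 qt1 xt2 yt2 pt2 qt2 xt3 yt3 pt3 qt3 xt4 yt4 pt4 qt4 : ℝ)
    (hxt1 : xt1 = (a1 * x1 + a2 * y1 + a3) / (c1 * x1 + c2 * y1 + c3))
    (hyt1 : yt1 = (b1 * x1 + b2 * y1 + b3) / (c1 * x1 + c2 * y1 + c3))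
    (hpt1 : pt1 = ((c1 * x1 + c2 * y1 + c3) • Matrix.vecMul (gradLine x1 y1 p1 q1) (!![a1, a2, a3; b1, b2, b3; c1, c2, c3])⁻¹) 0)
    (hqt1 : qt1 = ((c1 * x1 + c2 * y1 + c3) • Matrix.vecMul (gradLine x1 y1 p1 q1) (!![a1, a2, a3; b1, b2, b3; c1, c2, c3])⁻¹) 1)
    (hxt2 : xt2 = (a1 * x2 + a2 * y2 + a3) / (c1 * x2 + c2 * y2 + c3))
    (hyt2 : yt2 = (b1 * x2 + b2 * y2 + b3) / (c1 * x2 + c2 * y2 + c3))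
    (hpt2 : pt2 = ((c1 * x2 + c2 * y2 + c3) • Matrix.vecMul (gradLine x2 y2 p2 q2) (!![a1, a2, a3; b1, b2, b3; c1, c2, c3])⁻¹) 0)
    (hqt2 : qt2 = ((c1 * x2 + c2 * y2 + c3) • Matrix.vecMul (gradLine x2 y2 p2 q2) (!![a1, a2, a3; b1, b2, b3; c1, c2, c3])⁻¹) 1)
    (hxt3 : xt3 = (a1 * x3 + a2 * y3 + a3) / (c1 * x3 + c2 * y3 + c3))
    (hyt3 : yt3 = (b1 * x3 + b2 * y3 + b3) / (c1 * x3 + c2 * y3 + c3))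
    (hpt3 : pt3 = ((c1 * x3 + c2 * y3 + c3) • Matrix.vecMul (gradLine x3 y3 p3 q3) (!![a1, a2, a3; b1, b2, b3; c1, c2, c3])⁻¹) 0)
    (hqt3 : qt3 = ((c1 * x3 + c2 * y3 + c3) • Matrix.vecMul (gradLine x3 y3 p3 q3) (!![a1, a2, a3; b1, b2, b3; c1, c2, c3])⁻¹) 1)
    (hxt4 : xt4 = (a1 * x4 + a2 * y4 + a3) / (c1 * x4 + c2 * y4 + c3))
    (hyt4 : yt4 = (b1 * x4 + b2 * y4 + b3) / (c1 * x4 + c2 * y4 + c3))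
    (hpt4 : pt4 = ((c1 * x4 + c2 * y4 + c3) • Matrix.vecMul (gradLine x4 y4 p4 q4) (!![a1, a2, a3; b1, b2, b3; c1, c2, c3])⁻¹) 0)
    (hqt4 : qt4 = ((c1 * x4 + c2 * y4 + c3) • Matrix.vecMul (gradLine x4 y4 p4 q4) (!![a1, a2, a3; b1, b2, b3; c1, c2, c3])⁻¹) 1) :
    Matrix.det !![a1, a2, a3; b1, b2, b3; c1, c2, c3] ^ 4 * ((det3 (gradLine xt1 yt1 pt1 qt1) (gradLine xt2 yt2 pt2 qt2) (gradLine xt3 yt3 pt3 qt3)) * (det3 (gradLine xt1 yt1 pt1 qt1) (gradLine xt2 yt2 pt2 qt2) (gradLine xt4 yt4 pt4 qt4)) * (det3 (gradLine xt1 yt1 pt1 qt1) (gradLine xt3 yt3 pt3 qt3) (gradLine xt4 yt4 pt4 qt4)) * (det3 (gradLine xt2 yt2 pt2 qt2) (gradLine xt3 yt3 pt3 qt3) (gradLine xt4 yt4 pt4 qt4)))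
      = ((c1 * x1 + c2 * y1 + c3) * (c1 * x2 + c2 * y2 + c3) * (c1 * x3 + c2 * y3 + c3) * (c1 * x4 + c2 * y4 + c3)) ^ 3 * ((det3 (gradLine x1 y1 p1 q1) (gradLine x2 y2 p2 q2) (gradLine x3 y3 p3 q3)) * (det3 (gradLine x1 y1 p1 q1) (gradLine x2 y2 p2 q2) (gradLine x4 y4 p4 q4)) * (det3 (gradLine x1 y1 p1 q1) (gradLine x3 y3 p3 q3) (gradLine x4 y4 p4 q4)) * (det3 (gradLine x2 y2 p2 q2) (gradLine x3 y3 p3 q3) (gradLine x4 y4 p4 q4))) := by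
  subst hxt1 hyt1 hpt1 hqt1 hxt2 hyt2 hpt2 hqt2 hxt3 hyt3 hpt3 hqt3 hxt4 hyt4 hpt4 hqt4
  simp (disch := assumption) only [gradLine_transform a1 a2 a3 b1 b2 b3 c1 c2 c3 hD,
    det3_smul_vecMul_inv]
  field_simp
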